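/- Let n ≥ 1, let u ∈ [0,1]^{2n}, and let w ∈ ℝⁿ satisfy max{u_i + u_{n+i} − 1, 0} ≤ w_i ≤ min{u_i, u_{n+i}} for every i ∈ [n]. Define the symmetric 2n × 2n real matrix M by: M_{ii} = u_i − u_i² for all i ∈ [2n]; M_{i, n+i} = M_{n+i, i} = w_i − u_i u_{n+i} for all i ∈ [n]; and all other entries equal to 0. Then M is positive semidefinite. -/

import Mathlib

/-!
Every row of `M` has at most one off-diagonal entry, `w i - x y` with `(x, y) = (u i, u (n + i))`,
and the McCormick bounds on `[0,1]²` give `|w - x y| ≤ min (x - x²) (y - y²)`. So the symmetric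
matrix `M` is diagonally dominant, and by Gershgorin's circle theorem its eigenvalues are
nonnegative.
-/

open Finset
open scoped ComplexOrder

theorem Matrix.IsHermitian.posSemidef_of_sum_row_le_diag {𝕜 n : Type*} [RCLike 𝕜]
    [Fintype n] [DecidableEq n] {A : Matrix n n 𝕜} (hA : A.IsHermitian)
    (hdom : ∀ k, ∑ j ∈ univ.erase k, ‖A k j‖ ≤ RCLike.re (A k k)) : A.PosSemidef := by
  refine hA.posSemidef_iff_eigenvalues_nonneg.mpr fun i => ?_
  set μ := hA.eigenvalues i
  have hμ : Module.End.HasEigenvalue (Matrix.toLin' A) (μ : 𝕜) := by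
    rw [Module.End.hasEigenvalue_iff_mem_spectrum, Matrix.spectrum_toLin']
    exact spectrum.algebraMap_mem 𝕜 (hA.eigenvalues_mem_spectrum_real i)
  obtain ⟨k, hk⟩ := eigenvalue_mem_ball hμ
  rw [mem_closedBall_iff_norm] at hk
  have hre : RCLike.re (A k k) - μ ≤ ‖(μ : 𝕜) - A k k‖ := by
    simpa [norm_sub_rev] using RCLike.re_le_norm (A k k - μ)
  show 0 ≤ μ
  linarith [hdom k]

def McCormick (x y w : ℝ) : Prop :=
  max (x + y - 1) 0 ≤ w ∧ w ≤ min x y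

namespace McCormick

variable {x y w : ℝ}

theorem swap (h : McCormick x y w) : McCormick y x w := by
  rwa [McCormick, add_comm y, min_comm]

theorem abs_sub_mul_le (h : McCormick x y w) (hx : x ∈ Set.Icc (0 : ℝ) 1)
    (hy : y ∈ Set.Icc (0 : ℝ) 1) : |w - x * y| ≤ x - x ^ 2 := by
  obtain ⟨⟨hw₁, hw₀⟩, hwx, hwy⟩ := And.imp max_le_iff.mp le_min_iff.mp h
  obtain ⟨hx₀, hx₁⟩ := hx
  obtain ⟨hy₀, hy₁⟩ := hy
  -- i.e. `x (x + y - 1) ≤ w ≤ x (1 - x + y)`, products of the box and McCormick constraints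
  rw [abs_le]
  constructor <;> nlinarith [mul_nonneg hx₀ hy₀, mul_nonneg (sub_nonneg.2 hx₁) (sub_nonneg.2 hy₁),
    mul_nonneg hx₀ (sub_nonneg.2 hy₁), mul_nonneg (sub_nonneg.2 hx₁) hy₀]

end McCormick

theorem stmt_9 (n : ℕ)
    (u : Fin n ⊕ Fin n → ℝ) (hu : ∀ i, u i ∈ Set.Icc (0 : ℝ) 1)
    (w : Fin n → ℝ)
    (hw : ∀ i : Fin n,
      max (u (Sum.inl i) + u (Sum.inr i) - 1) 0 ≤ w i ∧
      w i ≤ min (u (Sum.inl i)) (u (Sum.inr i)))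
    (M : Matrix (Fin n ⊕ Fin n) (Fin n ⊕ Fin n) ℝ)
    (hM : ∀ i j, M i j =
      if i = j then u i - (u i) ^ 2
      else
        match i, j with
        | Sum.inl i', Sum.inr j' =>
            if i' = j' then w i' - u (Sum.inl i') * u (Sum.inr i') else 0
        | Sum.inr i', Sum.inl j' =>
            if i' = j' then w j' - u (Sum.inl j') * u (Sum.inr j') else 0
        | _, _ => 0) :
    M.PosSemidef := by
  have hoff : ∀ k j, j ≠ k → j ≠ k.swap → M k j = 0 := by
    rintro (i | i) (j | j) h₁ h₂ <;> simp [hM] <;> grind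
  have hsymm : M.IsHermitian := by
    refine Matrix.IsHermitian.ext fun k j => ?_
    rcases k with i | i <;> rcases j with j | j <;> by_cases h : i = j <;> simp [hM, h, eq_comm]
  refine hsymm.posSemidef_of_sum_row_le_diag fun k => ?_
  rw [sum_eq_single k.swap (fun j hj hjs => by simp [hoff k j (ne_of_mem_erase hj) hjs])
    (by rcases k <;> simp)]
  rcases k with i | i
  · simpa [hM] using McCormick.abs_sub_mul_le (hw i) (hu _) (hu _)
  · simpa [hM, mul_comm] using (McCormick.swap (hw i)).abs_sub_mul_le (hu _) (hu _)
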